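/- Let R be a ring and M a finitely generated R-module admitting a finite free resolution 0 → F_k → ⋯ → F_0 → M → 0 by finite free modules. Then M lies in the smallest strictly full triangulated subcategory of the derived category D^b(Mod_R) containing R (closed under shifts, isomorphisms, and cones of distinguished triangles). In particular, for R a polynomial ring, R generates D^b of finitely generated R-modules. -/

import Mathlib

open CategoryTheory CategoryTheory.Limits CategoryTheory.Pretriangulated

universe w u

/-!
Dimension shifting. If `F → Z` is a projective resolution, then `0 → K → F₀ → Z → 0` is short
exact, where the syzygy `K = ker (F₀ → Z)` is resolved by `F` with `F₀` deleted. A short exact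
sequence of objects gives a distinguished triangle of complexes concentrated in degree `0`, so a
triangulated subcategory of the derived category containing `K` and `F₀` contains `Z`; induction
on the length of the resolution reduces the theorem to the terms `Fₙ`. A finite free module is a
finite product of copies of `R`, and triangulated subcategories are closed under finite products.
-/

namespace CategoryTheory

namespace ProjectiveResolution

variable {C : Type*} [Category* C] [Abelian C] {Z : C}

/- The source is written `(truncate.obj F.complex).X 0` rather than the defeq `F.complex.X 1`:
otherwise `ChainComplex.toSingle₀Equiv_symm_apply_f_zero` does not fire in `syzygyResolution`. -/
noncomputable def toSyzygy (F : ProjectiveResolution Z) :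
    (ChainComplex.truncate.obj F.complex).X 0 ⟶ kernel (F.π.f 0) :=
  kernel.lift _ (F.complex.d 1 0) F.complex_d_comp_π_f_zero

lemma toSyzygy_ι (F : ProjectiveResolution Z) : F.toSyzygy ≫ kernel.ι _ = F.complex.d 1 0 :=
  kernel.lift_ι _ _ _

lemma d_comp_toSyzygy (F : ProjectiveResolution Z) :
    (ChainComplex.truncate.obj F.complex).d 1 0 ≫ F.toSyzygy = 0 := by
  rw [← cancel_mono (kernel.ι _), Category.assoc, toSyzygy_ι, zero_comp]
  exact F.complex.d_comp_d 2 1 0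

lemma exact_d_toSyzygy (F : ProjectiveResolution Z) :
    (ShortComplex.mk _ _ F.d_comp_toSyzygy).Exact := by
  let φ : ShortComplex.mk _ _ F.d_comp_toSyzygy ⟶
      ShortComplex.mk _ _ (F.complex.d_comp_d 2 1 0) :=
    { τ₁ := 𝟙 (F.complex.X 2)
      τ₂ := 𝟙 (F.complex.X 1)
      τ₃ := kernel.ι _
      comm₁₂ := (Category.id_comp _).trans (Category.comp_id _).symm
      comm₂₃ := (Category.id_comp _).trans F.toSyzygy_ι.symm }
  have : Epi φ.τ₁ := inferInstanceAs (Epi (𝟙 (F.complex.X 2)))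
  have : IsIso φ.τ₂ := inferInstanceAs (IsIso (𝟙 (F.complex.X 1)))
  have : Mono φ.τ₃ := inferInstanceAs (Mono (kernel.ι _))
  exact (ShortComplex.exact_iff_of_epi_of_isIso_of_mono φ).2 (F.exact_succ 0)

noncomputable def syzygyResolution (F : ProjectiveResolution Z) :
    ProjectiveResolution (kernel (F.π.f 0)) where
  complex := ChainComplex.truncate.obj F.complex
  projective n := F.projective (n + 1)
  π := (ChainComplex.toSingle₀Equiv _ _).symm ⟨F.toSyzygy, F.d_comp_toSyzygy⟩
  quasiIso := ⟨fun n => by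
    obtain _ | n := n
    · rw [ChainComplex.quasiIsoAt₀_iff, ShortComplex.quasiIso_iff_of_zeros']
      · simp only [HomologicalComplex.shortComplexFunctor'_map_τ₂,
          ChainComplex.toSingle₀Equiv_symm_apply_f_zero]
        exact ⟨F.exact_d_toSyzygy, F.exact₀.epi_kernelLift⟩
      · exact (ChainComplex.truncate.obj F.complex).shape _ _ (by simp)
      all_goals rfl
    · rw [quasiIsoAt_iff_exactAt',
        HomologicalComplex.exactAt_iff' _ (n + 2) (n + 1) n (by simp) (by simp)]
      · exact (HomologicalComplex.exactAt_iff' _ (n + 3) (n + 2) (n + 1) (by simp) (by simp)).1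
          (F.complex_exactAt_succ (n + 1))
      · exact ChainComplex.exactAt_succ_single_obj _ _⟩

lemma shortExact_kernel (F : ProjectiveResolution Z) :
    (ShortComplex.mk _ _ (kernel.condition (F.π.f 0))).ShortExact :=
  .mk' (ShortComplex.exact_of_f_is_kernel _ (kernelIsKernel _)) inferInstance inferInstance

end ProjectiveResolution

lemma ObjectProperty.IsTriangulated.of_isTriangulatedClosed₃ {C : Type*} [Category* C]
    [HasZeroObject C] [HasShift C ℤ] [Preadditive C] [∀ n : ℤ, (shiftFunctor C n).Additive]
    [Pretriangulated C] {P : ObjectProperty C} [P.IsClosedUnderIsomorphisms]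
    [P.IsStableUnderShift ℤ] [P.IsTriangulatedClosed₃] {X : C} (hX : P X) :
    P.IsTriangulated :=
  have : P.IsTriangulatedClosed₂ := .of_isTriangulatedClosed₃
  { exists_zero := ⟨_, isZero_zero C,
      P.ext_of_isTriangulatedClosed₃ _ (contractible_distinguished X) hX hX⟩ }

end CategoryTheory

namespace DerivedCategory

section

variable {C : Type*} [Category* C] [Abelian C] [HasDerivedCategory C]
  (P : ObjectProperty (DerivedCategory C)) [P.IsTriangulated] [P.IsClosedUnderIsomorphisms]

lemma prop_singleFunctor_of_shortExact {S : ShortComplex C} (hS : S.ShortExact)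
    (h₁ : P ((singleFunctor C 0).obj S.X₁)) (h₂ : P ((singleFunctor C 0).obj S.X₂)) :
    P ((singleFunctor C 0).obj S.X₃) :=
  P.ext_of_isTriangulatedClosed₃ _ hS.singleTriangle_distinguished h₁ h₂

lemma prop_singleFunctor_of_projectiveResolution {Z : C} (F : ProjectiveResolution Z) (k : ℕ)
    (hk : ∀ n, k ≤ n → IsZero (F.complex.X n))
    (hF : ∀ n, P ((singleFunctor C 0).obj (F.complex.X n))) :
    P ((singleFunctor C 0).obj Z) := by
  induction k generalizing Z with
  | zero =>
    have hZ := IsZero.of_epi (F.π.f 0) (hk 0 le_rfl)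
    exact P.prop_of_isZero (Functor.map_isZero _ hZ)
  | succ k ih =>
    have hK := ih F.syzygyResolution (fun n hn => hk (n + 1) (by omega)) (fun n => hF (n + 1))
    exact prop_singleFunctor_of_shortExact P F.shortExact_kernel hK (hF 0)

end

lemma prop_singleFunctor_of_finite_free {R : Type u} [Ring R] [HasDerivedCategory (ModuleCat.{u} R)]
    (P : ObjectProperty (DerivedCategory (ModuleCat.{u} R)))
    [P.IsTriangulated] [P.IsClosedUnderIsomorphisms]
    (hR : P ((singleFunctor _ 0).obj (ModuleCat.of R R)))
    (N : ModuleCat.{u} R) [Module.Free R N] [Module.Finite R N] :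
    P ((singleFunctor _ 0).obj N) := by
  let Q := P.inverseImage (singleFunctor _ 0)
  have : Q.IsClosedUnderFiniteProducts := ⟨fun _ _ => inferInstance⟩
  have hpi : Q (ModuleCat.of R (Module.Free.ChooseBasisIndex R N → R)) :=
    Q.prop_of_isLimit_fan (ModuleCat.productConeIsLimit fun _ => ModuleCat.of R R) fun _ => hR
  exact Q.prop_of_iso (Module.Free.chooseBasis R N).equivFun.toModuleIso.symm hpi

end DerivedCategory

theorem mem_triangulated_closure_of_ring_of_finite_free_resolution_general
    {R : Type u} [Ring R] [HasDerivedCategory.{w} (ModuleCat.{u} R)]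
    (M : ModuleCat.{u} R)
    (k : ℕ) (F : ChainComplex (ModuleCat.{u} R) ℕ)
    (hfree : ∀ n, Module.Free R (F.X n)) (hfin : ∀ n, Module.Finite R (F.X n))
    (hbdd : ∀ n, k < n → IsZero (F.X n))
    (π : F ⟶ (ChainComplex.single₀ (ModuleCat.{u} R)).obj M) [QuasiIso π]
    (P : DerivedCategory (ModuleCat.{u} R) → Prop)
    (hP_iso : ∀ {X Y}, (X ≅ Y) → P X → P Y)
    (hP_shift : ∀ X (n : ℤ), P X → P (X⟦n⟧))
    (hP_cone : ∀ T ∈ distTriang (DerivedCategory (ModuleCat.{u} R)),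
      P T.obj₁ → P T.obj₂ → P T.obj₃)
    (hR : P ((DerivedCategory.singleFunctor (ModuleCat.{u} R) 0).obj (ModuleCat.of R R))) :
    P ((DerivedCategory.singleFunctor (ModuleCat.{u} R) 0).obj M) := by
  have : ObjectProperty.IsClosedUnderIsomorphisms P := ⟨fun e => hP_iso e⟩
  have : ObjectProperty.IsStableUnderShift P ℤ := ⟨fun n => ⟨fun X => hP_shift X n⟩⟩
  have : ObjectProperty.IsTriangulatedClosed₃ P := .mk' hP_cone
  have : ObjectProperty.IsTriangulated P := .of_isTriangulatedClosed₃ hR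
  let resolution : ProjectiveResolution M :=
    { complex := F
      projective := fun n => ModuleCat.projective_of_free (Module.Free.chooseBasis R (F.X n))
      π := π }
  exact DerivedCategory.prop_singleFunctor_of_projectiveResolution P resolution (k + 1) hbdd
    fun n => DerivedCategory.prop_singleFunctor_of_finite_free P hR (F.X n)

/-- Let `R` be a ring and `M` a finitely generated `R`-module admitting a
finite free resolution `0 → F_k → ⋯ → F_0 → M → 0` by finite free modules. Then `M`
(viewed as a complex concentrated in degree 0) lies in the smallest strictly full
triangulated subcategory of the derived category of `Mod_R` containing `R` (closed under
isomorphisms, shifts, and cones of distinguished triangles); thus `R` generates the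
derived category. -/
theorem mem_triangulated_closure_of_ring_of_finite_free_resolution
    {R : Type u} [Ring R] [HasDerivedCategory.{w} (ModuleCat.{u} R)]
    (M : ModuleCat.{u} R) [Module.Finite R M]
    (k : ℕ) (F : ChainComplex (ModuleCat.{u} R) ℕ)
    (hfree : ∀ n, Module.Free R (F.X n)) (hfin : ∀ n, Module.Finite R (F.X n))
    (hbdd : ∀ n, k < n → IsZero (F.X n))
    (π : F ⟶ (ChainComplex.single₀ (ModuleCat.{u} R)).obj M) [QuasiIso π]
    (P : DerivedCategory (ModuleCat.{u} R) → Prop)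
    (hP_iso : ∀ {X Y}, (X ≅ Y) → P X → P Y)
    (hP_shift : ∀ X (n : ℤ), P X → P (X⟦n⟧))
    (hP_cone : ∀ T ∈ distTriang (DerivedCategory (ModuleCat.{u} R)),
      P T.obj₁ → P T.obj₂ → P T.obj₃)
    (hR : P ((DerivedCategory.singleFunctor (ModuleCat.{u} R) 0).obj (ModuleCat.of R R))) :
    P ((DerivedCategory.singleFunctor (ModuleCat.{u} R) 0).obj M) :=
  mem_triangulated_closure_of_ring_of_finite_free_resolution_general M k F hfree hfin hbdd π P
    hP_iso hP_shift hP_cone hR
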